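/- Oleĭnik entropy condition for the DEP shock: let G(u) = 2u(1−u)(2u−1), let ρ ∈ [0, 1/2] and λ ∈ ℝ with ρ < λ ≤ 3/4 − ρ/2. Then for every v ∈ [ρ, λ], (λ − ρ)·G(v) ≤ (λ − v)·G(ρ) + (v − ρ)·G(λ); that is, the chord of the graph of G between ρ and λ lies above the graph, so the discontinuity with left value λ and right value ρ is an entropy shock. -/
import Mathlib

/-- The DEP macroscopic flux `G(u) = 2u(1-u)(2u-1)`. -/
def depG (u : ℝ) : ℝ := 2 * u * (1 - u) * (2 * u - 1)

/-- Oleĭnik entropy condition for the DEP shock: for `ρ ∈ [0, 1/2]` and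
`ρ < λ ≤ 3/4 - ρ/2`, the chord of the graph of `G` between `ρ` and `λ` lies above the
graph, so the discontinuity with left value `λ` and right value `ρ` is an entropy
shock. -/
theorem depG_oleinik_shock_condition
    (ρ l : ℝ) (hρ : ρ ∈ Set.Icc (0 : ℝ) (1 / 2))
    (hρl : ρ < l) (hl : l ≤ 3 / 4 - ρ / 2) :
    ∀ v ∈ Set.Icc ρ l,
      (l - ρ) * depG v ≤ (l - v) * depG ρ + (v - ρ) * depG l := by
  rintro v ⟨h1, h2⟩
  have ha : (0:ℝ) ≤ l - ρ := by linarith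
  have hb : (0:ℝ) ≤ v - ρ := by linarith
  have hc : (0:ℝ) ≤ l - v := by linarith
  have hd : (0:ℝ) ≤ 3/2 - ρ - l - v := by linarith
  have key : (l - v) * depG ρ + (v - ρ) * depG l - (l - ρ) * depG v
      = 4 * ((l - ρ) * (v - ρ) * (l - v) * (3/2 - ρ - l - v)) := by
    simp only [depG]; ring
  nlinarith [mul_nonneg (mul_nonneg (mul_nonneg ha hb) hc) hd]
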